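/- The propensity score balancing property: if e(X) = P(D=1|X) then D ⟂ X | e(X), i.e., P(D=1 | X, e(X)) = P(D=1 | e(X)) = e(X) almost surely. -/

import Mathlib

open MeasureTheory ProbabilityTheory

/-!
Since `σ(e(X)) ≤ σ(X)`, the tower property gives `E[D | e(X)] = E[E[D | X] | e(X)] = e(X)`.
Consequently `E[D | X] = E[D | e(X)]`, and because `D` is `{0,1}`-valued every `1{D ∈ s}` is an
affine function of `D`, so `E[1{D ∈ s} | X] = E[1{D ∈ s} | e(X)]` as well. Conditional
independence then follows by conditioning on `X` first: for `A ∈ σ(X)`,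
`E[1{D ∈ s} 1_A | e(X)] = E[E[1{D ∈ s} | X] 1_A | e(X)] = E[1{D ∈ s} | e(X)] E[1_A | e(X)]`.
-/

theorem indicator_preimage_eq_const_add_mul {Ω : Type*} {D : Ω → ℝ} (hD01 : ∀ ω, D ω = 0 ∨ D ω = 1) (s : Set ℝ) :
    (D ⁻¹' s).indicator (fun _ => (1 : ℝ)) = fun ω =>
      s.indicator 1 0 + (s.indicator 1 1 - s.indicator 1 0) * D ω := by
  ext ω
  change (D ⁻¹' s).indicator ((1 : ℝ → ℝ) ∘ D) ω = _
  rw [Set.indicator_comp_right]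
  rcases hD01 ω with h | h <;> simp [h]

section CondExp

variable {Ω : Type*} {m m₁ m₂ mΩ : MeasurableSpace Ω} {μ : Measure Ω} [IsFiniteMeasure μ]

theorem condExp_indicator_ae_eq_mul_of_condExp_ae_eq (h₁₂ : m₁ ≤ m₂) (h₂ : m₂ ≤ mΩ)
    {f : Ω → ℝ} (hf : Integrable f μ) (hf₁₂ : μ[f | m₂] =ᵐ[μ] μ[f | m₁]) {A : Set Ω}
    (hA : MeasurableSet[m₂] A) :
    μ[A.indicator f | m₁] =ᵐ[μ] μ[f | m₁] * μ⟦A | m₁⟧ := by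
  have hA_int : Integrable (A.indicator fun _ => (1 : ℝ)) μ :=
    (integrable_const 1).indicator (h₂ A hA)
  have h_mul : A.indicator μ[f | m₁] = μ[f | m₁] * A.indicator fun _ => 1 := by
    ext ω; by_cases hω : ω ∈ A <;> simp [hω]
  calc μ[A.indicator f | m₁]
      =ᵐ[μ] μ[μ[A.indicator f | m₂] | m₁] := (condExp_condExp_of_le h₁₂ h₂).symm
    _ =ᵐ[μ] μ[A.indicator μ[f | m₁] | m₁] :=
        condExp_congr_ae ((condExp_indicator hf hA).trans hf₁₂.indicator)
    _ =ᵐ[μ] μ[f | m₁] * μ⟦A | m₁⟧ := by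
        rw [h_mul]
        exact condExp_mul_of_stronglyMeasurable_left stronglyMeasurable_condExp
          (h_mul ▸ integrable_condExp.indicator (h₂ A hA)) hA_int

theorem condExp_const_add_mul (hm : m ≤ mΩ) {D : Ω → ℝ} (hD : Integrable D μ) (a c : ℝ) :
    μ[fun ω => a + c * D ω | m] =ᵐ[μ] fun ω => a + c * μ[D | m] ω := by
  filter_upwards [condExp_add (integrable_const a) (hD.smul c) m, condExp_smul (μ := μ) c D m]
    with ω h_add h_smul
  change μ[(fun _ => a) + c • D | m] ω = _
  rw [h_add, Pi.add_apply, condExp_const hm, h_smul]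
  rfl

theorem condExp_indicator_preimage_ae_eq_of_condExp_ae_eq (h₁ : m₁ ≤ mΩ) (h₂ : m₂ ≤ mΩ)
    {D : Ω → ℝ} (hD : Integrable D μ) (hD01 : ∀ ω, D ω = 0 ∨ D ω = 1)
    (hD₁₂ : μ[D | m₂] =ᵐ[μ] μ[D | m₁]) (s : Set ℝ) :
    μ⟦D ⁻¹' s | m₂⟧ =ᵐ[μ] μ⟦D ⁻¹' s | m₁⟧ := by
  rw [indicator_preimage_eq_const_add_mul hD01 s]
  filter_upwards [condExp_const_add_mul h₂ hD _ _, condExp_const_add_mul h₁ hD _ _, hD₁₂]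
    with ω hω₂ hω₁ hω
  rw [hω₂, hω₁, hω]

theorem condIndepFun_of_condExp_preimage_ae_eq [StandardBorelSpace Ω] {β γ : Type*}
    [MeasurableSpace β] [MeasurableSpace γ] (hm : m ≤ mΩ) {f : Ω → β} {g : Ω → γ}
    (hf : Measurable f) (hg : Measurable g) (hmg : m ≤ MeasurableSpace.comap g inferInstance)
    (h : ∀ s, MeasurableSet s →
      μ⟦f ⁻¹' s | MeasurableSpace.comap g inferInstance⟧ =ᵐ[μ] μ⟦f ⁻¹' s | m⟧) :
    CondIndepFun m hm f g μ := by
  rw [condIndepFun_iff_condExp_inter_preimage_eq_mul hf hg]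
  intro s t hs ht
  have h_prod := condExp_indicator_ae_eq_mul_of_condExp_ae_eq hmg hg.comap_le
    ((integrable_const 1).indicator (hf hs)) (h s hs) ⟨t, ht, rfl⟩
  rwa [Set.indicator_indicator, Set.inter_comm] at h_prod

end CondExp

theorem propensity_score_balancing_general
    {Ω S : Type*} {mΩ : MeasurableSpace Ω} [StandardBorelSpace Ω]
    [MeasurableSpace S] (μ : Measure Ω) [IsProbabilityMeasure μ]
    (X : Ω → S) (D : Ω → ℝ) (e : S → ℝ)
    (hX : Measurable X) (hD : Measurable D) (he_meas : Measurable e)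
    (hD01 : ∀ ω, D ω = 0 ∨ D ω = 1)
    (hmeX : MeasurableSpace.comap (fun ω => e (X ω)) inferInstance ≤ mΩ)
    -- e(X) is a version of E[D | σ(X)]
    (he : (fun ω => e (X ω)) =ᵐ[μ] μ[D | MeasurableSpace.comap X inferInstance]) :
    CondIndepFun (MeasurableSpace.comap (fun ω => e (X ω)) inferInstance) hmeX D X μ ∧
      μ[D | MeasurableSpace.comap (fun ω => e (X ω)) inferInstance]
        =ᵐ[μ] fun ω => e (X ω) := by
  set mE := MeasurableSpace.comap (fun ω => e (X ω)) inferInstance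
  set mX := MeasurableSpace.comap X inferInstance
  have hEX : mE ≤ mX := (he_meas.comp (comap_measurable X)).comap_le
  have hD_int : Integrable D μ := .of_bound hD.aestronglyMeasurable 1 <|
    ae_of_all _ fun ω => by rcases hD01 ω with h | h <;> simp [h]
  have hDE : μ[D | mE] =ᵐ[μ] fun ω => e (X ω) :=
    calc μ[D | mE] =ᵐ[μ] μ[μ[D | mX] | mE] := (condExp_condExp_of_le hEX hX.comap_le).symm
      _ =ᵐ[μ] μ[fun ω => e (X ω) | mE] := condExp_congr_ae he.symm
      _ = fun ω => e (X ω) := condExp_of_stronglyMeasurable hmeX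
          (comap_measurable _).stronglyMeasurable (integrable_condExp.congr he.symm)
  refine ⟨condIndepFun_of_condExp_preimage_ae_eq hmeX hD hX hEX fun s _ => ?_, hDE⟩
  exact condExp_indicator_preimage_ae_eq_of_condExp_ae_eq hmeX hX.comap_le hD_int hD01
    (he.symm.trans hDE.symm) s

/-- the propensity-score balancing property. If `e(X) = E[D | X]`
(the propensity score of the `{0,1}`-valued treatment `D`), then `D ⟂ X | e(X)`
and `P(D = 1 | e(X)) = e(X)` a.s., i.e. `E[D | σ(e(X))] = e(X)` a.s. -/
theorem propensity_score_balancing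
    {Ω S : Type*} {mΩ : MeasurableSpace Ω} [StandardBorelSpace Ω] [Nonempty Ω]
    [MeasurableSpace S] (μ : Measure Ω) [IsProbabilityMeasure μ]
    (X : Ω → S) (D : Ω → ℝ) (e : S → ℝ)
    (hX : Measurable X) (hD : Measurable D) (he_meas : Measurable e)
    (hD01 : ∀ ω, D ω = 0 ∨ D ω = 1)
    (hmX : MeasurableSpace.comap X inferInstance ≤ mΩ)
    (hmeX : MeasurableSpace.comap (fun ω => e (X ω)) inferInstance ≤ mΩ)
    -- e(X) is a version of E[D | σ(X)]
    (he : (fun ω => e (X ω)) =ᵐ[μ] μ[D | MeasurableSpace.comap X inferInstance]) :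
    CondIndepFun (MeasurableSpace.comap (fun ω => e (X ω)) inferInstance) hmeX D X μ ∧
      μ[D | MeasurableSpace.comap (fun ω => e (X ω)) inferInstance]
        =ᵐ[μ] fun ω => e (X ω) :=
  propensity_score_balancing_general μ X D e hX hD he_meas hD01 hmeX he
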